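/- arXiv:1212.6851 — 2 statements merged into one kernel-verified Lean document; each statement's English description precedes it below -/
import Mathlib

section
/- Let n ∈ ℕ and let ρ : (0,∞) → ℝ satisfy condition (C) with (s_1^ρ)'(r) > 0 for all r > 0, and let σ be the inverse function of s_1^ρ. Then ∫_{ℝ^n} f_n^ρ(x) dx = 1 with respect to the n-dimensional Lebesgue measure; that is, the measure ν_n^ρ with Lebesgue density f_n^ρ is a probability measure on ℝ^n. -/
open MeasureTheory Set Filter Metric

noncomputable section
open Classical

/-- The map `s_1^ρ : ℝ → ℝ`, `r ↦ ρ(|r|) r` (equal to `0` at `r = 0`). -/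
def s1 (ρ : ℝ → ℝ) (r : ℝ) : ℝ := ρ |r| * r

/-- The map `s_n^ρ : ℝ^n → ℝ^n`, `x ↦ ρ(|x|) x` (equal to `0` at `x = 0`). -/
def sn (n : ℕ) (ρ : ℝ → ℝ) (x : EuclideanSpace ℝ (Fin n)) : EuclideanSpace ℝ (Fin n) :=
  ρ ‖x‖ • x

/-- Condition (C): `ρ` is `C¹` and positive on `(0,∞)` and `s_1^ρ` is strictly increasing. -/
def CondC (ρ : ℝ → ℝ) : Prop :=
  ContDiffOn ℝ 1 ρ (Ioi 0) ∧ (∀ r : ℝ, 0 < r → 0 < ρ r) ∧ StrictMono (s1 ρ)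

/-- `σ`, the inverse function of `s_1^ρ`. -/
def sigma0 (ρ : ℝ → ℝ) : ℝ → ℝ := Function.invFun (s1 ρ)

/-- The limit density `f_n^ρ`. -/
def fDen (n : ℕ) (ρ : ℝ → ℝ) (x : EuclideanSpace ℝ (Fin n)) : ℝ :=
  if x ∈ sn n ρ '' {y | y ≠ 0} then
    (2 * Real.pi) ^ (-(n : ℝ) / 2) * Real.exp (-(sigma0 ρ ‖x‖) ^ 2 / 2) *
      (sigma0 ρ ‖x‖ / ‖x‖) ^ (n - 1) * deriv (sigma0 ρ) ‖x‖
  else 0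

/-- The measure `ν_n^ρ`, with Lebesgue density `f_n^ρ`. -/
def nuRho (n : ℕ) (ρ : ℝ → ℝ) : Measure (EuclideanSpace ℝ (Fin n)) :=
  volume.withDensity fun x => ENNReal.ofReal (fDen n ρ x)

/-- `A_m`, the surface area of the unit sphere in `ℝ^m`. -/
def sA (m : ℕ) : ℝ :=
  (μH[(m : ℝ) - 1] (Metric.sphere (0 : EuclideanSpace ℝ (Fin m)) 1)).toReal

/-- `V_n`, the volume of the unit ball in `ℝ^n`. -/
def uV (n : ℕ) : ℝ := (volume (Metric.ball (0 : EuclideanSpace ℝ (Fin n)) 1)).toReal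

/-- `M_n^f` -/
def Mf (n : ℕ) (f : ℝ → ℝ) : ℝ := (sA n)⁻¹ * ∫ r in Ioi (0 : ℝ), f r * r ^ (n - 1)

/-- The radial probability measure `μ_n^f` with density `f(|x|)/M_n^f`. -/
def muRad (n : ℕ) (f : ℝ → ℝ) : Measure (EuclideanSpace ℝ (Fin n)) :=
  volume.withDensity fun x => ENNReal.ofReal (f ‖x‖ / Mf n f)

/-- `v_N`: the uniform probability measure on the sphere of radius `√N` in `ℝ^N`. -/
def sphereMeas (N : ℕ) : Measure (EuclideanSpace ℝ (Fin N)) :=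
  ((μH[(N : ℝ) - 1] : Measure (EuclideanSpace ℝ (Fin N)))
      (Metric.sphere 0 (Real.sqrt N)))⁻¹ •
    (μH[(N : ℝ) - 1] : Measure (EuclideanSpace ℝ (Fin N))).restrict
      (Metric.sphere 0 (Real.sqrt N))

/-- Projection of `ℝ^N` onto the first `n` coordinates. -/
def projE (n N : ℕ) (x : EuclideanSpace ℝ (Fin N)) : EuclideanSpace ℝ (Fin n) :=
  WithLp.toLp 2 (fun i => if h : (i : ℕ) < N then x ⟨i, h⟩ else 0)

/-- `P_{n,N}^ρ = s_n^ρ ∘ P_{n,N}`. -/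
def Pmap (n N : ℕ) (ρ : ℝ → ℝ) (x : EuclideanSpace ℝ (Fin N)) : EuclideanSpace ℝ (Fin n) :=
  sn n ρ (projE n N x)

/-- Boundary measure `μ⁺[A]`. -/
def boundaryMeasure {α : Type*} [MeasurableSpace α] [PseudoEMetricSpace α]
    (μ : Measure α) (A : Set α) : ℝ :=
  Filter.liminf (fun ε : ℝ => ((μ (Metric.thickening ε A)).toReal - (μ A).toReal) / ε)
    (nhdsWithin 0 (Ioi 0))

/-- Isoperimetric profile `I[μ]`. -/
def isoProfile {α : Type*} [MeasurableSpace α] [PseudoEMetricSpace α]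
    (μ : Measure α) (a : ℝ) : ℝ :=
  sInf {b | ∃ A : Set α, MeasurableSet A ∧ (μ A).toReal = a ∧ b = boundaryMeasure μ A}

end

/-!
In polar coordinates `f_n^ρ` is the radial profile
`r ↦ (2π)^{-n/2} e^{-σ(r)²/2} (σ(r)/r)^{n-1} σ'(r)` supported on `s_1^ρ((0,∞))`.
Substituting `r = s_1^ρ(t)` and using `σ'(s_1^ρ(t)) = 1 / (s_1^ρ)'(t)` turns its radial integral
`∫ r^{n-1} f(r) dr` into `∫ (2π)^{-n/2} e^{-t²/2} t^{n-1} dt`, the radial integral of the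
standard Gaussian density on `ℝ^n`; hence `∫ f_n^ρ = 1`.
-/

open Topology

lemma isProbabilityMeasure_withDensity_ofReal {α : Type*} [MeasurableSpace α]
    {μ : Measure α} {f : α → ℝ} (hf : 0 ≤ f) (h : ∫ x, f x ∂μ = 1) :
    IsProbabilityMeasure (μ.withDensity fun x => ENNReal.ofReal (f x)) := by
  constructor
  rw [withDensity_apply _ MeasurableSet.univ, Measure.restrict_univ,
    ← ofReal_integral_eq_lintegral_ofReal (Integrable.of_integral_ne_zero (h ▸ one_ne_zero))
      (Eventually.of_forall hf), h, ENNReal.ofReal_one]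

lemma integral_gaussian_euclideanSpace (n : ℕ) :
    ∫ x : EuclideanSpace ℝ (Fin n), (2 * Real.pi) ^ (-(n : ℝ) / 2) * Real.exp (-‖x‖ ^ 2 / 2)
      = 1 := by
  have hexp : ∀ x : EuclideanSpace ℝ (Fin n), -‖x‖ ^ 2 / 2 = -(1 / 2) * ‖x‖ ^ 2 := fun _ => by
    ring
  simp_rw [hexp]
  rw [integral_const_mul, GaussianFourier.integral_rexp_neg_mul_sq_norm one_half_pos,
    finrank_euclideanSpace_fin, div_div_eq_mul_div, div_one, mul_comm Real.pi,
    ← Real.rpow_add (by positivity), neg_div, neg_add_cancel, Real.rpow_zero]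

lemma integral_fun_norm_euclideanSpace {n : ℕ} (hn : 0 < n) (f : ℝ → ℝ) :
    ∫ x : EuclideanSpace ℝ (Fin n), f ‖x‖ =
      n • volume.real (ball (0 : EuclideanSpace ℝ (Fin n)) 1) •
        ∫ y in Ioi 0, y ^ (n - 1) • f y := by
  have : NeZero n := ⟨hn.ne'⟩
  rw [integral_fun_norm_addHaar, finrank_euclideanSpace_fin]

namespace LimitDensity

variable {ρ : ℝ → ℝ}

lemma s1_of_pos {t : ℝ} (ht : 0 < t) : s1 ρ t = ρ t * t := by
  rw [s1, abs_of_pos ht]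

lemma s1_pos (hmono : StrictMono (s1 ρ)) {t : ℝ} (ht : 0 < t) : 0 < s1 ρ t := by
  simpa [s1] using hmono ht

lemma sigma0_s1 (hmono : StrictMono (s1 ρ)) (t : ℝ) : sigma0 ρ (s1 ρ t) = t :=
  Function.leftInverse_invFun hmono.injective t

lemma hasDerivAt_s1 (hρ : ContDiffOn ℝ 1 ρ (Ioi 0)) {t : ℝ} (ht : 0 < t) :
    HasDerivAt (s1 ρ) (deriv (s1 ρ) t) t := by
  have hdiff : DifferentiableAt ℝ (fun r => ρ r * r) t :=
    ((hρ.contDiffAt (Ioi_mem_nhds ht)).differentiableAt one_ne_zero).mul differentiableAt_id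
  have heq : s1 ρ =ᶠ[𝓝 t] fun r => ρ r * r :=
    eventually_of_mem (Ioi_mem_nhds ht) fun _ hr => s1_of_pos hr
  exact (heq.differentiableAt_iff.2 hdiff).hasDerivAt

lemma continuousOn_s1 (hρ : ContDiffOn ℝ 1 ρ (Ioi 0)) : ContinuousOn (s1 ρ) (Ioi 0) :=
  fun _ ht => (hasDerivAt_s1 hρ ht).continuousAt.continuousWithinAt

lemma measurableSet_image_s1 (hC : CondC ρ) : MeasurableSet (s1 ρ '' Ioi 0) :=
  measurableSet_Ioi.image_of_continuousOn_injOn (continuousOn_s1 hC.1) hC.2.2.injective.injOn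

lemma image_s1_Ioi_mem_nhds (hC : CondC ρ) {t : ℝ} (ht : 0 < t) :
    s1 ρ '' Ioi 0 ∈ 𝓝 (s1 ρ t) := by
  have hIcc : Icc (t / 2) (t + 1) ⊆ Ioi 0 := fun _ hx => lt_of_lt_of_le (by linarith) hx.1
  refine mem_of_superset (Ioo_mem_nhds (hC.2.2 (show t / 2 < t by linarith))
    (hC.2.2 (show t < t + 1 by linarith))) ?_
  exact (intermediate_value_Ioo (by linarith) ((continuousOn_s1 hC.1).mono hIcc)).trans
    (image_mono (Ioo_subset_Icc_self.trans hIcc))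

lemma continuousAt_sigma0 (hC : CondC ρ) {t : ℝ} (ht : 0 < t) :
    ContinuousAt (sigma0 ρ) (s1 ρ t) := by
  have hmono : StrictMonoOn (sigma0 ρ) (s1 ρ '' Ioi 0) := by
    rintro _ ⟨u, -, rfl⟩ _ ⟨v, -, rfl⟩ huv
    rw [sigma0_s1 hC.2.2, sigma0_s1 hC.2.2]
    exact hC.2.2.lt_iff_lt.1 huv
  refine hmono.continuousAt_of_image_mem_nhds (image_s1_Ioi_mem_nhds hC ht) ?_
  simpa only [image_image, sigma0_s1 hC.2.2, image_id'] using Ioi_mem_nhds ht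

lemma hasDerivAt_sigma0 (hC : CondC ρ) {t : ℝ} (ht : 0 < t) (hd : deriv (s1 ρ) t ≠ 0) :
    HasDerivAt (sigma0 ρ) (deriv (s1 ρ) t)⁻¹ (s1 ρ t) := by
  refine HasDerivAt.of_local_left_inverse (f := s1 ρ) (continuousAt_sigma0 hC ht) ?_ hd ?_
  · rw [sigma0_s1 hC.2.2]
    exact hasDerivAt_s1 hC.1 ht
  · filter_upwards [image_s1_Ioi_mem_nhds hC ht] with _ hy
    obtain ⟨u, -, rfl⟩ := hy
    rw [sigma0_s1 hC.2.2]

lemma mem_image_sn_iff (hρ : ∀ r : ℝ, 0 < r → 0 < ρ r) {n : ℕ}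
    (x : EuclideanSpace ℝ (Fin n)) :
    x ∈ sn n ρ '' {y | y ≠ 0} ↔ ‖x‖ ∈ s1 ρ '' Ioi 0 := by
  constructor
  · rintro ⟨y, hy, rfl⟩
    have hy' : 0 < ‖y‖ := norm_pos_iff.2 hy
    refine ⟨‖y‖, hy', ?_⟩
    rw [sn, norm_smul, Real.norm_of_nonneg (hρ _ hy').le, s1_of_pos hy']
  · rintro ⟨t, ht : 0 < t, hx⟩
    rw [s1_of_pos ht] at hx
    have hx0 : 0 < ‖x‖ := hx ▸ mul_pos (hρ t ht) ht
    have hnorm : ‖(t / ‖x‖) • x‖ = t := by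
      rw [norm_smul, Real.norm_of_nonneg (div_pos ht hx0).le, div_mul_cancel₀ _ hx0.ne']
    refine ⟨(t / ‖x‖) • x, smul_ne_zero (div_pos ht hx0).ne' (norm_pos_iff.1 hx0), ?_⟩
    have hscalar : ρ t * (t / ‖x‖) = 1 := by
      rw [← hx]
      field_simp [(hρ t ht).ne', ht.ne']
    rw [sn, hnorm, smul_smul, hscalar, one_smul]

noncomputable def fRad (n : ℕ) (ρ : ℝ → ℝ) (r : ℝ) : ℝ :=
  (2 * Real.pi) ^ (-(n : ℝ) / 2) * Real.exp (-(sigma0 ρ r) ^ 2 / 2) *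
    (sigma0 ρ r / r) ^ (n - 1) * deriv (sigma0 ρ) r

lemma fDen_eq_indicator (hρ : ∀ r : ℝ, 0 < r → 0 < ρ r) (n : ℕ)
    (x : EuclideanSpace ℝ (Fin n)) :
    fDen n ρ x = (s1 ρ '' Ioi 0).indicator (fRad n ρ) ‖x‖ := by
  by_cases h : ‖x‖ ∈ s1 ρ '' Ioi 0
  · rw [fDen, if_pos ((mem_image_sn_iff hρ x).2 h), indicator_of_mem h, fRad]
  · rw [fDen, if_neg (mt (mem_image_sn_iff hρ x).1 h), indicator_of_notMem h]

lemma deriv_s1_mul_fRad_s1 (hC : CondC ρ) (hpos : ∀ r : ℝ, 0 < r → 0 < deriv (s1 ρ) r)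
    (n : ℕ) {t : ℝ} (ht : 0 < t) :
    deriv (s1 ρ) t * (s1 ρ t ^ (n - 1) * fRad n ρ (s1 ρ t)) =
      t ^ (n - 1) * ((2 * Real.pi) ^ (-(n : ℝ) / 2) * Real.exp (-t ^ 2 / 2)) := by
  have hd := hpos t ht
  have hs := s1_pos hC.2.2 ht
  rw [fRad, sigma0_s1 hC.2.2, (hasDerivAt_sigma0 hC ht hd.ne').deriv, div_pow]
  field_simp

lemma fRad_nonneg (hC : CondC ρ) (hpos : ∀ r : ℝ, 0 < r → 0 < deriv (s1 ρ) r) (n : ℕ) :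
    ∀ r ∈ s1 ρ '' Ioi 0, 0 ≤ fRad n ρ r := by
  rintro _ ⟨t, ht : 0 < t, rfl⟩
  have hs := s1_pos hC.2.2 ht
  have hd := hpos t ht
  rw [fRad, sigma0_s1 hC.2.2, (hasDerivAt_sigma0 hC ht hd.ne').deriv]
  positivity

lemma integral_Ioi_pow_mul_indicator_fRad (hC : CondC ρ)
    (hpos : ∀ r : ℝ, 0 < r → 0 < deriv (s1 ρ) r) (n : ℕ) :
    ∫ r in Ioi 0, r ^ (n - 1) • (s1 ρ '' Ioi 0).indicator (fRad n ρ) r =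
      ∫ t in Ioi 0, t ^ (n - 1) • ((2 * Real.pi) ^ (-(n : ℝ) / 2) * Real.exp (-t ^ 2 / 2)) := by
  have hsub : s1 ρ '' Ioi 0 ⊆ Ioi 0 := by
    rintro _ ⟨t, ht, rfl⟩
    exact s1_pos hC.2.2 ht
  calc ∫ r in Ioi 0, r ^ (n - 1) • (s1 ρ '' Ioi 0).indicator (fRad n ρ) r
      = ∫ r in Ioi 0, (s1 ρ '' Ioi 0).indicator (fun r => r ^ (n - 1) * fRad n ρ r) r := by
        congr 1 with r
        rw [smul_eq_mul, indicator_mul_right]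
    _ = ∫ r in s1 ρ '' Ioi 0, r ^ (n - 1) * fRad n ρ r := by
        rw [setIntegral_indicator (measurableSet_image_s1 hC), inter_eq_right.2 hsub]
    _ = ∫ t in Ioi 0, |deriv (s1 ρ) t| • (s1 ρ t ^ (n - 1) * fRad n ρ (s1 ρ t)) :=
        integral_image_eq_integral_abs_deriv_smul measurableSet_Ioi
          (fun t ht => (hasDerivAt_s1 hC.1 ht).hasDerivWithinAt) hC.2.2.injective.injOn _
    _ = _ := setIntegral_congr_fun measurableSet_Ioi fun t ht => by
        rw [abs_of_pos (hpos t ht), smul_eq_mul, smul_eq_mul, deriv_s1_mul_fRad_s1 hC hpos n ht]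

end LimitDensity

open MeasureTheory Set Filter in
theorem statement2 (n : ℕ) (hn : 0 < n) (ρ : ℝ → ℝ) (hC : CondC ρ)
    (hpos : ∀ r : ℝ, 0 < r → 0 < deriv (s1 ρ) r) :
    (∫ x : EuclideanSpace ℝ (Fin n), fDen n ρ x) = 1 ∧
      IsProbabilityMeasure (nuRho n ρ) := by
  have hfDen : fDen n ρ = fun x => (s1 ρ '' Ioi 0).indicator (LimitDensity.fRad n ρ) ‖x‖ :=
    funext (LimitDensity.fDen_eq_indicator hC.2.1 n)
  have hint : ∫ x : EuclideanSpace ℝ (Fin n), fDen n ρ x = 1 := by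
    rw [hfDen, integral_fun_norm_euclideanSpace hn,
      LimitDensity.integral_Ioi_pow_mul_indicator_fRad hC hpos,
      ← integral_fun_norm_euclideanSpace hn
        (fun r => (2 * Real.pi) ^ (-(n : ℝ) / 2) * Real.exp (-r ^ 2 / 2)),
      integral_gaussian_euclideanSpace]
  refine ⟨hint, isProbabilityMeasure_withDensity_ofReal (fun x => ?_) hint⟩
  rw [hfDen]
  exact indicator_nonneg (LimitDensity.fRad_nonneg hC hpos n) _
end

section
/- Let ρ : (0,∞) → ℝ satisfy condition (C), let n ∈ ℕ and L > 0. Then s_1^ρ : ℝ → ℝ is Lipschitz continuous with smallest Lipschitz constant L if and only if s_n^ρ : ℝ^n → ℝ^n is Lipschitz continuous with smallest Lipschitz constant L. -/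
open MeasureTheory Set Filter Metric

/-!
Along a unit vector `e`, the isometry `r ↦ r • e` intertwines `s_1^ρ` with the radial map
`x ↦ ρ ‖x‖ • x`, so every Lipschitz constant of the radial map is one of `s_1^ρ`. Conversely, with
`a = ‖x‖`, `b = ‖y‖`, `p = ⟪x, y⟫`, both sides of the squared Lipschitz inequality for the radial
map are affine in `p ∈ [-ab, ab]`; at `p = ab` and `p = -ab` it is the inequality for `s_1^ρ` at
`(a, b)` and at `(a, -b)`. So the two maps have the same Lipschitz constants, hence the same
smallest one.
-/

theorem sq_norm_radial_le {K a b p ρa ρb : ℝ} (hp : |p| ≤ a * b)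
    (hdiff : |ρa * a - ρb * b| ≤ K * |a - b|) (hsum : |ρa * a + ρb * b| ≤ K * |a + b|) :
    (ρa * a) ^ 2 - 2 * (ρa * ρb) * p + (ρb * b) ^ 2 ≤ K ^ 2 * (a ^ 2 - 2 * p + b ^ 2) := by
  obtain ⟨hp₁, hp₂⟩ := abs_le.mp hp
  have hdiff₂ := pow_le_pow_left₀ (abs_nonneg _) hdiff 2
  have hsum₂ := pow_le_pow_left₀ (abs_nonneg _) hsum 2
  rw [sq_abs, mul_pow, sq_abs] at hdiff₂ hsum₂
  rcases le_total (K ^ 2) (ρa * ρb) with h | h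
  · nlinarith [mul_nonneg (by linarith : 0 ≤ p + a * b) (sub_nonneg.mpr h)]
  · nlinarith [mul_nonneg (by linarith : 0 ≤ a * b - p) (sub_nonneg.mpr h)]

section Radial

variable {E : Type*} [NormedAddCommGroup E] [InnerProductSpace ℝ E]

theorem norm_smul_sub_smul_sq (s t : ℝ) (x y : E) :
    ‖s • x - t • y‖ ^ 2 = (s * ‖x‖) ^ 2 - 2 * (s * t) * inner ℝ x y + (t * ‖y‖) ^ 2 := by
  rw [norm_sub_sq_real, real_inner_smul_left, real_inner_smul_right, norm_smul, norm_smul,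
    Real.norm_eq_abs, Real.norm_eq_abs, mul_pow, mul_pow, sq_abs, sq_abs]
  ring

theorem lipschitzWith_radial_of_s1 {ρ : ℝ → ℝ} {K : NNReal} (h : LipschitzWith K (s1 ρ)) :
    LipschitzWith K (fun x : E => ρ ‖x‖ • x) := by
  have hs1 : ∀ r : ℝ, 0 ≤ r → s1 ρ r = ρ r * r := fun r hr => by rw [s1, abs_of_nonneg hr]
  have hs1_neg : ∀ r : ℝ, 0 ≤ r → s1 ρ (-r) = -(ρ r * r) := fun r hr => by
    rw [s1, abs_neg, abs_of_nonneg hr, mul_neg]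
  refine LipschitzWith.of_dist_le_mul fun x y => ?_
  have hdiff : |ρ ‖x‖ * ‖x‖ - ρ ‖y‖ * ‖y‖| ≤ K * |‖x‖ - ‖y‖| := by
    simpa only [Real.dist_eq, hs1 _ (norm_nonneg x), hs1 _ (norm_nonneg y)]
      using h.dist_le_mul ‖x‖ ‖y‖
  have hsum : |ρ ‖x‖ * ‖x‖ + ρ ‖y‖ * ‖y‖| ≤ K * |‖x‖ + ‖y‖| := by
    simpa only [Real.dist_eq, hs1 _ (norm_nonneg x), hs1_neg _ (norm_nonneg y), sub_neg_eq_add]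
      using h.dist_le_mul ‖x‖ (-‖y‖)
  have key := sq_norm_radial_le (abs_real_inner_le_norm x y) hdiff hsum
  rw [dist_eq_norm, dist_eq_norm]
  refine abs_le_of_sq_le_sq' ?_ (by positivity) |>.2
  rwa [norm_smul_sub_smul_sq, mul_pow (K : ℝ), norm_sub_sq_real]

theorem lipschitzWith_s1_of_radial {ρ : ℝ → ℝ} {K : NNReal} {e : E} (he : ‖e‖ = 1)
    (h : LipschitzWith K (fun x : E => ρ ‖x‖ • x)) : LipschitzWith K (s1 ρ) := by
  set ι := LinearIsometry.toSpanSingleton ℝ E he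
  have hcomm : ι ∘ s1 ρ = (fun x : E => ρ ‖x‖ • x) ∘ ι := by
    ext1 r
    simp only [Function.comp_apply, ι, LinearIsometry.toSpanSingleton_apply, norm_smul, he,
      Real.norm_eq_abs, mul_one, smul_smul, s1]
  rw [← ι.isometry.lipschitzWith_iff, hcomm]
  simpa only [mul_one] using h.comp ι.isometry.lipschitz

end Radial

open MeasureTheory Set Filter in
theorem statement8_general (ρ : ℝ → ℝ) (n : ℕ) (hn : 0 < n)
    (L : NNReal) :
    (LipschitzWith L (s1 ρ) ∧ ∀ K : NNReal, LipschitzWith K (s1 ρ) → L ≤ K) ↔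
      (LipschitzWith L (sn n ρ) ∧ ∀ K : NNReal, LipschitzWith K (sn n ρ) → L ≤ K) := by
  have hiff : ∀ K : NNReal, LipschitzWith K (s1 ρ) ↔ LipschitzWith K (sn n ρ) := fun K =>
    ⟨lipschitzWith_radial_of_s1, lipschitzWith_s1_of_radial
      (PiLp.norm_single 2 _ (⟨0, hn⟩ : Fin n) (1 : ℝ) |>.trans norm_one)⟩
  simp_rw [hiff]

open MeasureTheory Set Filter in
theorem statement8 (ρ : ℝ → ℝ) (hC : CondC ρ) (n : ℕ) (hn : 0 < n)
    (L : NNReal) (hL : 0 < L) :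
    (LipschitzWith L (s1 ρ) ∧ ∀ K : NNReal, LipschitzWith K (s1 ρ) → L ≤ K) ↔
      (LipschitzWith L (sn n ρ) ∧ ∀ K : NNReal, LipschitzWith K (sn n ρ) → L ≤ K) :=
  statement8_general ρ n hn L
end
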